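/- For the 3-qubit W state |W⟩ = (|100⟩ + |010⟩ + |001⟩)/√3, the squared entanglement eigenvalue equals 4/9, hence E_G(W) = 5/9. -/

import Mathlib

open scoped BigOperators
open Matrix

/-- The set of unit-norm fully separable pure states of `n` qubits. -/
def SepStates (n : ℕ) : Set ((Fin n → Fin 2) → ℂ) :=
  {φ | ∃ v : Fin n → (Fin 2 → ℂ),
    (∀ i, ∑ x : Fin 2, Complex.normSq (v i x) = 1) ∧
    ∀ f : Fin n → Fin 2, φ f = ∏ i : Fin n, v i (f i)}

/-- Geometric measure of entanglement. -/
noncomputable def GeomEnt (n : ℕ) (ψ : (Fin n → Fin 2) → ℂ) : ℝ :=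
  1 - sSup {r : ℝ | ∃ φ ∈ SepStates n, r = ‖star φ ⬝ᵥ ψ‖^2}

/-- The 3-qubit W state `(|100⟩+|010⟩+|001⟩)/√3`: the coefficient is `1/√3`
exactly on bit strings of Hamming weight one. -/
noncomputable def Wstate : (Fin 3 → Fin 2) → ℂ :=
  fun f => if ∃ i : Fin 3, f i = 1 ∧ ∀ j : Fin 3, j ≠ i → f j = 0 then
    (1 / Real.sqrt 3 : ℝ) else 0

/-!
Only the three weight-one amplitudes of a product state `v₀ ⊗ v₁ ⊗ v₂` meet `W`, so with
`aᵢ = |vᵢ 0|`, `bᵢ = |vᵢ 1|` the overlap is at most `(b₀a₁a₂ + a₀b₁a₂ + a₀a₁b₂)/√3`.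
Cauchy–Schwarz bounds the square of the bracket by `(Σ bᵢ²)(Σ (aⱼaₖ)²) ≤ (3 - s) s² / 3`
with `s = Σ aᵢ²`, and `4 - (3 - s) s² = (s - 2)² (s + 1) ≥ 0`. Equality holds for
`vᵢ = (√(2/3), √(1/3))`, where the overlap is `2/3`.
-/

lemma one_div_sqrt_three_sq : (1 / Real.sqrt 3) ^ 2 = 1 / 3 := by
  rw [div_pow, Real.sq_sqrt (by norm_num), one_pow]

lemma Wstate_apply (f : Fin 3 → Fin 2) :
    Wstate f = if f ∈ ({![1,0,0], ![0,1,0], ![0,0,1]} : Finset (Fin 3 → Fin 2))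
      then ((1 / Real.sqrt 3 : ℝ) : ℂ) else 0 := by
  unfold Wstate
  congr 1
  revert f
  decide

lemma dotProduct_Wstate (g : (Fin 3 → Fin 2) → ℂ) :
    star g ⬝ᵥ Wstate = ((1 / Real.sqrt 3 : ℝ) : ℂ) *
      star (g ![1,0,0] + g ![0,1,0] + g ![0,0,1]) := by
  simp only [dotProduct, Wstate_apply, mul_ite, mul_zero, Finset.sum_ite_mem,
    Finset.univ_inter]
  rw [Finset.sum_insert (by decide), Finset.sum_insert (by decide), Finset.sum_singleton]
  simp only [Pi.star_apply, star_add]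
  ring

lemma sub_mul_sq_le_four {s : ℝ} (hs : -1 ≤ s) : (3 - s) * s ^ 2 ≤ 4 := by
  nlinarith [mul_nonneg (sq_nonneg (s - 2)) (show 0 ≤ s + 1 by linarith)]

lemma sq_add_mul_le_four_thirds {a₀ a₁ a₂ b₀ b₁ b₂ : ℝ}
    (h₀ : a₀ ^ 2 + b₀ ^ 2 = 1) (h₁ : a₁ ^ 2 + b₁ ^ 2 = 1) (h₂ : a₂ ^ 2 + b₂ ^ 2 = 1) :
    (b₀ * a₁ * a₂ + a₀ * b₁ * a₂ + a₀ * a₁ * b₂) ^ 2 ≤ 4 / 3 := by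
  set s := a₀ ^ 2 + a₁ ^ 2 + a₂ ^ 2
  have hcs : (b₀ * a₁ * a₂ + a₀ * b₁ * a₂ + a₀ * a₁ * b₂) ^ 2 ≤
      (b₀ ^ 2 + b₁ ^ 2 + b₂ ^ 2) * ((a₁ * a₂) ^ 2 + (a₀ * a₂) ^ 2 + (a₀ * a₁) ^ 2) := by
    nlinarith [sq_nonneg (b₀ * (a₀ * a₂) - b₁ * (a₁ * a₂)),
      sq_nonneg (b₀ * (a₀ * a₁) - b₂ * (a₁ * a₂)), sq_nonneg (b₁ * (a₀ * a₁) - b₂ * (a₀ * a₂))]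
  have hb : b₀ ^ 2 + b₁ ^ 2 + b₂ ^ 2 = 3 - s := by linear_combination h₀ + h₁ + h₂
  have hpairs : (a₁ * a₂) ^ 2 + (a₀ * a₂) ^ 2 + (a₀ * a₁) ^ 2 ≤ s ^ 2 / 3 := by
    nlinarith [sq_nonneg (a₀ ^ 2 - a₁ ^ 2), sq_nonneg (a₁ ^ 2 - a₂ ^ 2), sq_nonneg (a₀ ^ 2 - a₂ ^ 2)]
  have hs : 0 ≤ 3 - s := by nlinarith [sq_nonneg b₀, sq_nonneg b₁, sq_nonneg b₂]
  calc _ ≤ (3 - s) * ((a₁ * a₂) ^ 2 + (a₀ * a₂) ^ 2 + (a₀ * a₁) ^ 2) := hb ▸ hcs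
    _ ≤ (3 - s) * (s ^ 2 / 3) := by gcongr
    _ ≤ 4 / 3 := by
      have : 0 ≤ s := by positivity
      nlinarith [sub_mul_sq_le_four (s := s) (by linarith)]

def productState {n : ℕ} (v : Fin n → Fin 2 → ℂ) : (Fin n → Fin 2) → ℂ :=
  fun f => ∏ i, v i (f i)

lemma dotProduct_productState_Wstate (v : Fin 3 → Fin 2 → ℂ) :
    star (productState v) ⬝ᵥ Wstate = ((1 / Real.sqrt 3 : ℝ) : ℂ) *
      star (v 0 1 * v 1 0 * v 2 0 + v 0 0 * v 1 1 * v 2 0 + v 0 0 * v 1 0 * v 2 1) := by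
  simp only [dotProduct_Wstate, productState, Fin.prod_univ_three]
  rfl

lemma norm_sq_dotProduct_Wstate_le {φ : (Fin 3 → Fin 2) → ℂ} (hφ : φ ∈ SepStates 3) :
    ‖star φ ⬝ᵥ Wstate‖ ^ 2 ≤ 4 / 9 := by
  obtain ⟨v, hv, hφv⟩ := hφ
  obtain rfl : φ = productState v := funext hφv
  have hunit (i : Fin 3) : ‖v i 0‖ ^ 2 + ‖v i 1‖ ^ 2 = 1 := by
    simpa only [Complex.sq_norm, Fin.sum_univ_two] using hv i
  have htriangle : ‖v 0 1 * v 1 0 * v 2 0 + v 0 0 * v 1 1 * v 2 0 + v 0 0 * v 1 0 * v 2 1‖ ≤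
      ‖v 0 1‖ * ‖v 1 0‖ * ‖v 2 0‖ + ‖v 0 0‖ * ‖v 1 1‖ * ‖v 2 0‖
        + ‖v 0 0‖ * ‖v 1 0‖ * ‖v 2 1‖ := by
    calc _ ≤ _ := norm_add₃_le
      _ = _ := by simp only [norm_mul]
  rw [dotProduct_productState_Wstate, norm_mul, norm_star, Complex.norm_real, Real.norm_eq_abs,
    mul_pow, sq_abs, one_div_sqrt_three_sq]
  have hbracket := (pow_le_pow_left₀ (norm_nonneg _) htriangle 2).trans
    (sq_add_mul_le_four_thirds (hunit 0) (hunit 1) (hunit 2))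
  linarith

lemma exists_mem_SepStates_norm_sq_dotProduct_Wstate :
    ∃ φ ∈ SepStates 3, (4 / 9 : ℝ) = ‖star φ ⬝ᵥ Wstate‖ ^ 2 := by
  set c := 1 / Real.sqrt 3
  have hc : c ^ 2 = 1 / 3 := one_div_sqrt_three_sq
  have h2 : Real.sqrt 2 ^ 2 = 2 := Real.sq_sqrt (by norm_num)
  let u : Fin 2 → ℂ := ![((Real.sqrt 2 * c : ℝ) : ℂ), (c : ℂ)]
  refine ⟨productState fun _ => u, ⟨fun _ => u, fun _ => ?_, fun _ => rfl⟩, ?_⟩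
  · simp only [Fin.sum_univ_two, u, Matrix.cons_val_zero, Matrix.cons_val_one,
      Complex.normSq_ofReal]
    nlinarith
  · have hoverlap : u 1 * u 0 * u 0 + u 0 * u 1 * u 0 + u 0 * u 0 * u 1
        = ((3 * c * (Real.sqrt 2 * c) ^ 2 : ℝ) : ℂ) := by
      simp only [u, Matrix.cons_val_zero, Matrix.cons_val_one]
      push_cast
      ring
    rw [dotProduct_productState_Wstate, hoverlap, Complex.star_def, Complex.conj_ofReal,
      ← Complex.ofReal_mul, Complex.norm_real, Real.norm_eq_abs, sq_abs]
    have hexpand : c * (3 * c * (Real.sqrt 2 * c) ^ 2) = 3 * Real.sqrt 2 ^ 2 * (c ^ 2) ^ 2 := by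
      ring
    rw [hexpand, h2, hc]
    norm_num

/-- The squared entanglement eigenvalue of the W state is `4/9`,
hence `E_G(W) = 5/9`. -/
theorem wstate_geomEnt :
    sSup {r : ℝ | ∃ φ ∈ SepStates 3, r = ‖star φ ⬝ᵥ Wstate‖^2}
      = 4 / 9 ∧ GeomEnt 3 Wstate = 5 / 9 := by
  have hgreatest : IsGreatest {r : ℝ | ∃ φ ∈ SepStates 3, r = ‖star φ ⬝ᵥ Wstate‖^2} (4 / 9) :=
    ⟨exists_mem_SepStates_norm_sq_dotProduct_Wstate, by
      rintro r ⟨φ, hφ, rfl⟩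
      exact norm_sq_dotProduct_Wstate_le hφ⟩
  refine ⟨hgreatest.csSup_eq, ?_⟩
  rw [GeomEnt, hgreatest.csSup_eq]
  norm_num
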